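/- Let W be a Jacobi operator on ℓ²(ℤ) with a(n) = −1 and b(n) = 0 for |n| > n_max, let λ₁ < −2 be its lowest eigenvalue with strictly positive eigenfunction φ (φ(n) > 0 for all n, Wφ = λ₁φ), and define the bounded operator D on ℓ²(ℤ) by (Du)(n) = −√(−a(n)φ(n)/φ(n+1)) u(n+1) + √(−a(n)φ(n+1)/φ(n)) u(n). Then D*D = W − λ₁, and DD* = W₁ − λ₁ where W₁ is the Jacobi operator with off-diagonal sequence a₁(n) = −√(a(n)a(n+1)φ(n)φ(n+2))/φ(n+1) and potential b₁(n) = −a(n)(φ(n)/φ(n+1) + φ(n+1)/φ(n)) + λ₁. Moreover 0 is not an eigenvalue of DD*, so the eigenvalues of W₁ outside [−2,2] are precisely the eigenvalues of W outside [−2,2] other than λ₁. -/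

import Mathlib

open Filter

/-- `lam` is an eigenvalue of the Jacobi operator `W` on `ℓ²(ℤ)` with off-diagonal
sequence `a` and potential `b`. -/
def IsJacobiEigenvalue (a b : ℤ → ℝ) (lam : ℝ) : Prop :=
  ∃ u : ℤ → ℝ, Memℓp u 2 ∧ u ≠ 0 ∧
    ∀ n : ℤ, a (n - 1) * u (n - 1) + a n * u (n + 1) + b n * u n = lam * u n

/-- The commutation operator `D`:
`(Du)(n) = −√(−a(n)φ(n)/φ(n+1)) u(n+1) + √(−a(n)φ(n+1)/φ(n)) u(n)`. -/
noncomputable def Dop (a φ : ℤ → ℝ) (u : ℤ → ℝ) : ℤ → ℝ := fun n =>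
  -Real.sqrt (-a n * φ n / φ (n + 1)) * u (n + 1)
    + Real.sqrt (-a n * φ (n + 1) / φ n) * u n

/-- The adjoint operator `D*`:
`(D*u)(n) = −√(−a(n−1)φ(n−1)/φ(n)) u(n−1) + √(−a(n)φ(n+1)/φ(n)) u(n)`. -/
noncomputable def Dstarop (a φ : ℤ → ℝ) (u : ℤ → ℝ) : ℤ → ℝ := fun n =>
  -Real.sqrt (-a (n - 1) * φ (n - 1) / φ n) * u (n - 1)
    + Real.sqrt (-a n * φ (n + 1) / φ n) * u n

/-- The new off-diagonal sequence `a₁(n) = −√(a(n)a(n+1)φ(n)φ(n+2))/φ(n+1)`. -/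
noncomputable def a1seq (a φ : ℤ → ℝ) : ℤ → ℝ := fun n =>
  -Real.sqrt (a n * a (n + 1) * φ n * φ (n + 2)) / φ (n + 1)

/-- The new potential `b₁(n) = −a(n)(φ(n)/φ(n+1) + φ(n+1)/φ(n)) + λ₁`. -/
noncomputable def b1seq (a φ : ℤ → ℝ) (lam1 : ℝ) : ℤ → ℝ := fun n =>
  -a n * (φ n / φ (n + 1) + φ (n + 1) / φ n) + lam1

open Topology

/-!
Write `D u n = -α n u (n + 1) + β n u n` with `α n = √(-a n φ n / φ (n + 1))` and
`β n = √(-a n φ (n + 1) / φ n)`. Then `D*D = W - λ₁` is the eigenvalue equation of `φ`, and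
`DD* = W₁ - λ₁` is pure algebra. The same eigenvalue equation bounds `α` and `β`, so `D` and `D*`
act on `ℓ²`; there `D` carries eigenvectors of `D*D` to eigenvectors of `DD*` and `D*` carries
them back, so the two operators share their nonzero eigenvalues. Finally `DD*` is injective on
`ℓ²`: `⟨DD*ψ, ψ⟩ = ‖D*ψ‖²`, and a solution of `D*ψ = 0` has `φ n β n ψ n` constant, which
forces `ψ = 0` because `φ ∈ ℓ²`.
-/

section Sequences

variable {ι : Type*}

theorem memℓp_two_iff_summable_sq (u : ι → ℝ) : Memℓp u 2 ↔ Summable fun i => u i ^ 2 := by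
  rw [memℓp_gen_iff (by norm_num)]
  simp [Real.norm_eq_abs, sq_abs]

theorem Memℓp.tendsto_cofinite_zero {u : ι → ℝ} (hu : Memℓp u 2) :
    Tendsto u cofinite (𝓝 0) := by
  have h := ((memℓp_two_iff_summable_sq u).1 hu).tendsto_cofinite_zero.sqrt
  simp only [Real.sqrt_sq_eq_abs, Real.sqrt_zero] at h
  exact (tendsto_zero_iff_abs_tendsto_zero u).2 h

theorem Memℓp.comp_equiv {κ E : Type*} [NormedAddCommGroup E] {p : ENNReal} {f : ι → E}
    (hf : Memℓp f p) (e : κ ≃ ι) : Memℓp (f ∘ e) p := by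
  obtain rfl | rfl | hp := p.trichotomy
  · rw [memℓp_zero_iff] at hf ⊢
    exact hf.preimage e.injective.injOn
  · rw [memℓp_infty_iff] at hf ⊢
    convert hf using 1
    exact e.surjective.range_comp fun i => ‖f i‖
  · rw [memℓp_gen_iff hp] at hf ⊢
    exact e.summable_iff.2 hf

theorem Memℓp.mul_of_norm_le {p : ENNReal} {c u : ι → ℝ} {C : ℝ} (hc : ∀ i, ‖c i‖ ≤ C)
    (hu : Memℓp u p) : Memℓp (fun i => c i * u i) p :=
  (hu.norm.const_mul C).mono fun i => by
    rw [norm_mul]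
    exact mul_le_mul_of_nonneg_right (hc i) (norm_nonneg _)

theorem Memℓp.summable_mul {u v : ι → ℝ} (hu : Memℓp u 2) (hv : Memℓp v 2) :
    Summable fun i => u i * v i := by
  have h := lp.summable_mul (p := 2) (q := 2) (by simpa using Real.HolderConjugate.two_two)
    (⟨u, hu⟩ : lp (fun _ : ι => ℝ) 2) ⟨v, hv⟩
  exact Summable.of_norm (by simpa only [norm_mul] using h)

theorem bddAbove_range_of_forall_lt_abs {b : ℤ → ℝ} {N : ℤ} (hb : ∀ n, N < |n| → b n = 0) :
    BddAbove (Set.range b) := by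
  obtain ⟨B, hB⟩ := ((Set.finite_Icc (-N) N).image b).bddAbove
  refine ⟨max B 0, ?_⟩
  rintro _ ⟨n, rfl⟩
  by_cases hn : N < |n|
  · rw [hb n hn]
    exact le_max_right _ _
  · exact (hB ⟨n, Set.mem_Icc.2 (abs_le.1 (not_lt.1 hn)), rfl⟩).trans (le_max_left _ _)

end Sequences

section Eigenvalues

variable {ι : Type*}

def IsL2Eigenvalue (T : (ι → ℝ) → ι → ℝ) (μ : ℝ) : Prop :=
  ∃ u : ι → ℝ, Memℓp u 2 ∧ u ≠ 0 ∧ ∀ i, T u i = μ * u i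

theorem isL2Eigenvalue_sub_iff {S T : (ι → ℝ) → ι → ℝ} {c : ℝ}
    (h : ∀ u i, S u i = T u i - c * u i) (μ : ℝ) :
    IsL2Eigenvalue S (μ - c) ↔ IsL2Eigenvalue T μ := by
  simp only [IsL2Eigenvalue, h, sub_mul, sub_left_inj]

theorem IsL2Eigenvalue.comp_swap {L M : (ι → ℝ) →ₗ[ℝ] ι → ℝ}
    (hL : ∀ u, Memℓp u 2 → Memℓp (L u) 2) {μ : ℝ} (hμ : μ ≠ 0)
    (h : IsL2Eigenvalue (fun u => M (L u)) μ) : IsL2Eigenvalue (fun u => L (M u)) μ := by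
  obtain ⟨u, hu, hu0, hMLu⟩ := h
  have hMLu' : M (L u) = μ • u := funext hMLu
  refine ⟨L u, hL u hu, fun hLu => hu0 ?_, fun i => ?_⟩
  · have : μ • u = 0 := by rw [← hMLu', hLu, map_zero]
    exact (smul_eq_zero.1 this).resolve_left hμ
  · show L (M (L u)) i = μ * L u i
    rw [hMLu', map_smul]
    rfl

theorem isL2Eigenvalue_comp_comm {L M : (ι → ℝ) →ₗ[ℝ] ι → ℝ}
    (hL : ∀ u, Memℓp u 2 → Memℓp (L u) 2) (hM : ∀ u, Memℓp u 2 → Memℓp (M u) 2)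
    {μ : ℝ} (hμ : μ ≠ 0) :
    IsL2Eigenvalue (fun u => M (L u)) μ ↔ IsL2Eigenvalue (fun u => L (M u)) μ :=
  ⟨.comp_swap hL hμ, .comp_swap hM hμ⟩

theorem isL2Eigenvalue_iff_of_factorization {L M : (ι → ℝ) →ₗ[ℝ] ι → ℝ}
    {W W₁ : (ι → ℝ) → ι → ℝ} {c μ : ℝ}
    (hL : ∀ u, Memℓp u 2 → Memℓp (L u) 2) (hM : ∀ u, Memℓp u 2 → Memℓp (M u) 2)
    (hML : ∀ u i, M (L u) i = W u i - c * u i) (hLM : ∀ u i, L (M u) i = W₁ u i - c * u i)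
    (hker : ∀ ψ, Memℓp ψ 2 → L (M ψ) = 0 → ψ = 0) :
    IsL2Eigenvalue W₁ μ ↔ IsL2Eigenvalue W μ ∧ μ ≠ c := by
  rw [← isL2Eigenvalue_sub_iff hML, ← isL2Eigenvalue_sub_iff hLM]
  rcases eq_or_ne μ c with rfl | hμ
  · simp only [sub_self, ne_eq, not_true_eq_false, and_false, iff_false]
    rintro ⟨ψ, hψ, hψ0, h⟩
    exact hψ0 (hker ψ hψ (funext fun i => by simp [h]))
  · rw [isL2Eigenvalue_comp_comm hM hL (sub_ne_zero.2 hμ)]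
    simp [hμ]

end Eigenvalues

section Bidiagonal

variable {α β : ℤ → ℝ}

def upperBidiag (α β : ℤ → ℝ) : (ℤ → ℝ) →ₗ[ℝ] ℤ → ℝ where
  toFun u n := -α n * u (n + 1) + β n * u n
  map_add' u v := by
    ext n
    simp only [Pi.add_apply]
    ring
  map_smul' c u := by
    ext n
    simp only [Pi.smul_apply, smul_eq_mul, RingHom.id_apply]
    ring

def lowerBidiag (α β : ℤ → ℝ) : (ℤ → ℝ) →ₗ[ℝ] ℤ → ℝ where
  toFun u n := -α (n - 1) * u (n - 1) + β n * u n
  map_add' u v := by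
    ext n
    simp only [Pi.add_apply]
    ring
  map_smul' c u := by
    ext n
    simp only [Pi.smul_apply, smul_eq_mul, RingHom.id_apply]
    ring

@[simp]
theorem upperBidiag_apply (u : ℤ → ℝ) (n : ℤ) :
    upperBidiag α β u n = -α n * u (n + 1) + β n * u n :=
  rfl

@[simp]
theorem lowerBidiag_apply (u : ℤ → ℝ) (n : ℤ) :
    lowerBidiag α β u n = -α (n - 1) * u (n - 1) + β n * u n :=
  rfl

theorem lowerBidiag_upperBidiag_apply (u : ℤ → ℝ) (n : ℤ) :
    lowerBidiag α β (upperBidiag α β u) n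
      = (α (n - 1) ^ 2 + β n ^ 2) * u n - α (n - 1) * β (n - 1) * u (n - 1)
        - α n * β n * u (n + 1) := by
  simp only [lowerBidiag_apply, upperBidiag_apply, sub_add_cancel]
  ring

theorem upperBidiag_lowerBidiag_apply (u : ℤ → ℝ) (n : ℤ) :
    upperBidiag α β (lowerBidiag α β u) n
      = (α n ^ 2 + β n ^ 2) * u n - α (n - 1) * β n * u (n - 1)
        - α n * β (n + 1) * u (n + 1) := by
  simp only [lowerBidiag_apply, upperBidiag_apply, add_sub_cancel_right]
  ring

variable {C : ℝ}

theorem upperBidiag_memℓp (hα : ∀ n, ‖α n‖ ≤ C) (hβ : ∀ n, ‖β n‖ ≤ C)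
    {u : ℤ → ℝ} (hu : Memℓp u 2) : Memℓp (upperBidiag α β u) 2 :=
  ((hu.comp_equiv (Equiv.addRight 1)).mul_of_norm_le (c := fun n => -α n)
    (by simpa using hα)).add (hu.mul_of_norm_le hβ)

theorem lowerBidiag_memℓp (hα : ∀ n, ‖α n‖ ≤ C) (hβ : ∀ n, ‖β n‖ ≤ C)
    {u : ℤ → ℝ} (hu : Memℓp u 2) : Memℓp (lowerBidiag α β u) 2 :=
  ((hu.comp_equiv (Equiv.subRight 1)).mul_of_norm_le (c := fun n => -α (n - 1))
    (by simpa using fun n => hα (n - 1))).add (hu.mul_of_norm_le hβ)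

theorem tsum_upperBidiag_mul (hα : ∀ n, ‖α n‖ ≤ C) (hβ : ∀ n, ‖β n‖ ≤ C)
    {u v : ℤ → ℝ} (hu : Memℓp u 2) (hv : Memℓp v 2) :
    ∑' n, upperBidiag α β u n * v n = ∑' n, u n * lowerBidiag α β v n := by
  set x : ℤ → ℝ := fun n => β n * u n * v n
  set y : ℤ → ℝ := fun n => α n * u (n + 1) * v n
  have hx : Summable x := (hu.mul_of_norm_le hβ).summable_mul hv
  have hy : Summable y :=
    ((hu.comp_equiv (Equiv.addRight 1)).mul_of_norm_le hα).summable_mul hv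
  calc ∑' n, upperBidiag α β u n * v n = ∑' n, (x n - y n) :=
        tsum_congr fun n => by simp only [upperBidiag_apply, x, y]; ring
    _ = ∑' n, x n - ∑' n, y (n - 1) := by
        rw [hx.tsum_sub hy, ← (Equiv.subRight (1 : ℤ)).tsum_eq y]
        rfl
    _ = ∑' n, (x n - y (n - 1)) := (hx.tsum_sub ((Equiv.subRight 1).summable_iff.2 hy)).symm
    _ = ∑' n, u n * lowerBidiag α β v n :=
        tsum_congr fun n => by simp only [lowerBidiag_apply, x, y, sub_add_cancel]; ring

theorem lowerBidiag_eq_zero_of_upperBidiag_lowerBidiag_eq_zero (hα : ∀ n, ‖α n‖ ≤ C)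
    (hβ : ∀ n, ‖β n‖ ≤ C) {ψ : ℤ → ℝ} (hψ : Memℓp ψ 2)
    (h : upperBidiag α β (lowerBidiag α β ψ) = 0) : lowerBidiag α β ψ = 0 := by
  have hw := lowerBidiag_memℓp hα hβ hψ
  set w := lowerBidiag α β ψ
  have h0 : ∑' n, w n * w n = 0 := by
    rw [← tsum_upperBidiag_mul hα hβ hw hψ, h]
    simp
  have hww := (hasSum_zero_iff_of_nonneg fun n => mul_self_nonneg (w n)).1
    (h0 ▸ (hw.summable_mul hw).hasSum)
  funext n
  exact mul_self_eq_zero.1 (congrFun hww n)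

theorem eq_zero_of_lowerBidiag_eq_zero {φ ψ : ℤ → ℝ} (hβ : ∀ n, ‖β n‖ ≤ C)
    (hβ0 : ∀ n, β n ≠ 0) (hφ0 : ∀ n, φ n ≠ 0) (hαβ : ∀ n, φ (n + 1) * α n = φ n * β n)
    (hφ : Tendsto φ cofinite (𝓝 0)) (hψ : Tendsto ψ cofinite (𝓝 0))
    (h : lowerBidiag α β ψ = 0) : ψ = 0 := by
  set g : ℤ → ℝ := fun n => φ n * β n * ψ n
  have hg : Function.Periodic g 1 := fun n => by
    have hn := congrFun h (n + 1)
    simp only [lowerBidiag_apply, add_sub_cancel_right, Pi.zero_apply] at hn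
    linear_combination φ (n + 1) * hn + ψ n * hαβ n
  have hg_lim : Tendsto g cofinite (𝓝 0) := by
    have hφψ : Tendsto (fun n => C * ‖φ n * ψ n‖) cofinite (𝓝 0) := by
      simpa using (hφ.mul hψ).norm.const_mul C
    refine squeeze_zero_norm (fun n => ?_) hφψ
    rw [show g n = β n * (φ n * ψ n) by ring, norm_mul]
    exact mul_le_mul_of_nonneg_right (hβ n) (norm_nonneg _)
  have hg0 : g 0 = 0 := by
    refine tendsto_nhds_unique (tendsto_const_nhds.congr fun n => ?_) hg_lim
    simpa using (hg.int_mul_eq n).symm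
  funext n
  have hgn : g n = 0 := by simpa [hg0] using hg.int_mul_eq n
  simpa [g, hφ0 n, hβ0 n] using hgn

end Bidiagonal

section Commutation

variable {a φ : ℤ → ℝ}

noncomputable def commOffDiag (a φ : ℤ → ℝ) (n : ℤ) : ℝ := √(-a n * φ n / φ (n + 1))

noncomputable def commDiag (a φ : ℤ → ℝ) (n : ℤ) : ℝ := √(-a n * φ (n + 1) / φ n)

theorem Dop_eq : Dop a φ = upperBidiag (commOffDiag a φ) (commDiag a φ) :=
  rfl

theorem Dstarop_eq : Dstarop a φ = lowerBidiag (commOffDiag a φ) (commDiag a φ) := by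
  ext u n
  simp only [Dstarop, lowerBidiag_apply, commOffDiag, commDiag, sub_add_cancel]

theorem commOffDiag_nonneg (n : ℤ) : 0 ≤ commOffDiag a φ n :=
  Real.sqrt_nonneg _

theorem commDiag_nonneg (n : ℤ) : 0 ≤ commDiag a φ n :=
  Real.sqrt_nonneg _

theorem commOffDiag_sq (ha : ∀ n, a n < 0) (hφ : ∀ n, 0 < φ n) (n : ℤ) :
    commOffDiag a φ n ^ 2 = -a n * φ n / φ (n + 1) :=
  Real.sq_sqrt (div_nonneg (mul_nonneg (neg_nonneg.2 (ha n).le) (hφ n).le) (hφ _).le)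

theorem commDiag_sq (ha : ∀ n, a n < 0) (hφ : ∀ n, 0 < φ n) (n : ℤ) :
    commDiag a φ n ^ 2 = -a n * φ (n + 1) / φ n :=
  Real.sq_sqrt (div_nonneg (mul_nonneg (neg_nonneg.2 (ha n).le) (hφ _).le) (hφ n).le)

theorem commDiag_pos (ha : ∀ n, a n < 0) (hφ : ∀ n, 0 < φ n) (n : ℤ) : 0 < commDiag a φ n :=
  Real.sqrt_pos.2 (div_pos (mul_pos (neg_pos.2 (ha n)) (hφ _)) (hφ n))

theorem commOffDiag_mul_commDiag (ha : ∀ n, a n < 0) (hφ : ∀ n, 0 < φ n) (n : ℤ) :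
    commOffDiag a φ n * commDiag a φ n = -a n := by
  rw [← sq_eq_sq₀ (mul_nonneg (commOffDiag_nonneg n) (commDiag_nonneg _)) (neg_pos.2 (ha n)).le,
    mul_pow, commOffDiag_sq ha hφ, commDiag_sq ha hφ]
  field_simp [(hφ n).ne', (hφ (n + 1)).ne']

theorem commOffDiag_mul_commDiag_add_one (ha : ∀ n, a n < 0) (hφ : ∀ n, 0 < φ n) (n : ℤ) :
    commOffDiag a φ n * commDiag a φ (n + 1) = -a1seq a φ n := by
  have hprod : 0 ≤ a n * a (n + 1) * φ n * φ (n + 2) :=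
    (mul_pos (mul_pos (mul_pos_of_neg_of_neg (ha n) (ha _)) (hφ n)) (hφ _)).le
  rw [a1seq, neg_div, neg_neg,
    ← sq_eq_sq₀ (mul_nonneg (commOffDiag_nonneg n) (commDiag_nonneg _))
      (div_nonneg (Real.sqrt_nonneg _) (hφ _).le),
    mul_pow, commOffDiag_sq ha hφ, commDiag_sq ha hφ, div_pow, Real.sq_sqrt hprod,
    show n + 1 + 1 = n + 2 by ring]
  field_simp [(hφ n).ne', (hφ (n + 1)).ne']

theorem mul_commOffDiag (ha : ∀ n, a n < 0) (hφ : ∀ n, 0 < φ n) (n : ℤ) :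
    φ (n + 1) * commOffDiag a φ n = φ n * commDiag a φ n := by
  rw [← sq_eq_sq₀ (mul_nonneg (hφ _).le (commOffDiag_nonneg n))
      (mul_nonneg (hφ n).le (commDiag_nonneg n)),
    mul_pow, mul_pow, commOffDiag_sq ha hφ, commDiag_sq ha hφ]
  field_simp [(hφ n).ne', (hφ (n + 1)).ne']

theorem Dop_Dstarop_apply (ha : ∀ n, a n < 0) (hφ : ∀ n, 0 < φ n) (lam1 : ℝ)
    (u : ℤ → ℝ) (n : ℤ) :
    Dop a φ (Dstarop a φ u) n
      = (a1seq a φ (n - 1) * u (n - 1) + a1seq a φ n * u (n + 1)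
          + b1seq a φ lam1 n * u n) - lam1 * u n := by
  have h := commOffDiag_mul_commDiag_add_one ha hφ (n - 1)
  rw [sub_add_cancel] at h
  rw [Dop_eq, Dstarop_eq, upperBidiag_lowerBidiag_apply, h,
    commOffDiag_mul_commDiag_add_one ha hφ, commOffDiag_sq ha hφ, commDiag_sq ha hφ, b1seq]
  ring

theorem eq_zero_of_Dop_Dstarop_eq_zero {ψ : ℤ → ℝ} {C : ℝ} (ha : ∀ n, a n < 0)
    (hφ : ∀ n, 0 < φ n) (hφ2 : Memℓp φ 2) (hα : ∀ n, ‖commOffDiag a φ n‖ ≤ C)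
    (hβ : ∀ n, ‖commDiag a φ n‖ ≤ C) (hψ : Memℓp ψ 2) (h : Dop a φ (Dstarop a φ ψ) = 0) :
    ψ = 0 := by
  rw [Dop_eq, Dstarop_eq] at h
  exact eq_zero_of_lowerBidiag_eq_zero hβ (fun n => (commDiag_pos ha hφ n).ne')
    (fun n => (hφ n).ne') (mul_commOffDiag ha hφ) hφ2.tendsto_cofinite_zero
    hψ.tendsto_cofinite_zero
    (lowerBidiag_eq_zero_of_upperBidiag_lowerBidiag_eq_zero hα hβ hψ h)

variable {b : ℤ → ℝ} {lam1 : ℝ}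

theorem commOffDiag_sq_add_commDiag_sq (ha : ∀ n, a n < 0) (hφ : ∀ n, 0 < φ n)
    (heig : ∀ n, a (n - 1) * φ (n - 1) + a n * φ (n + 1) + b n * φ n = lam1 * φ n) (n : ℤ) :
    commOffDiag a φ (n - 1) ^ 2 + commDiag a φ n ^ 2 = b n - lam1 := by
  rw [commOffDiag_sq ha hφ, commDiag_sq ha hφ, sub_add_cancel]
  field_simp [(hφ n).ne']
  linear_combination -heig n

theorem exists_norm_commCoeff_le (ha : ∀ n, a n < 0) (hφ : ∀ n, 0 < φ n)
    (heig : ∀ n, a (n - 1) * φ (n - 1) + a n * φ (n + 1) + b n * φ n = lam1 * φ n)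
    (hb : BddAbove (Set.range b)) :
    ∃ C, (∀ n, ‖commOffDiag a φ n‖ ≤ C) ∧ ∀ n, ‖commDiag a φ n‖ ≤ C := by
  obtain ⟨B, hB⟩ := hb
  have hsq := commOffDiag_sq_add_commDiag_sq ha hφ heig
  refine ⟨√(B - lam1), fun n => Real.abs_le_sqrt ?_, fun n => Real.abs_le_sqrt ?_⟩
  · have h := hsq (n + 1)
    rw [add_sub_cancel_right] at h
    nlinarith [sq_nonneg (commDiag a φ (n + 1)), hB ⟨n + 1, rfl⟩]
  · nlinarith [sq_nonneg (commOffDiag a φ (n - 1)), hsq n, hB ⟨n, rfl⟩]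

theorem Dstarop_Dop_apply (ha : ∀ n, a n < 0) (hφ : ∀ n, 0 < φ n)
    (heig : ∀ n, a (n - 1) * φ (n - 1) + a n * φ (n + 1) + b n * φ n = lam1 * φ n)
    (u : ℤ → ℝ) (n : ℤ) :
    Dstarop a φ (Dop a φ u) n
      = (a (n - 1) * u (n - 1) + a n * u (n + 1) + b n * u n) - lam1 * u n := by
  rw [Dstarop_eq, Dop_eq, lowerBidiag_upperBidiag_apply, commOffDiag_mul_commDiag ha hφ,
    commOffDiag_mul_commDiag ha hφ, commOffDiag_sq_add_commDiag_sq ha hφ heig]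
  ring

end Commutation

def jacobiOp (a b : ℤ → ℝ) (u : ℤ → ℝ) (n : ℤ) : ℝ :=
  a (n - 1) * u (n - 1) + a n * u (n + 1) + b n * u n

theorem isJacobiEigenvalue_iff_isL2Eigenvalue (a b : ℤ → ℝ) (lam : ℝ) :
    IsJacobiEigenvalue a b lam ↔ IsL2Eigenvalue (jacobiOp a b) lam :=
  Iff.rfl

theorem jacobi_commutation_step
    (a b : ℤ → ℝ) (nmax : ℕ)
    (ha_neg : ∀ n, a n < 0)
    (hb : ∀ n : ℤ, (nmax : ℤ) < |n| → b n = 0)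
    (lam1 : ℝ)
    (φ : ℤ → ℝ) (hφ_pos : ∀ n, 0 < φ n) (hφ_mem : Memℓp φ 2)
    (hφ_eig : ∀ n : ℤ, a (n - 1) * φ (n - 1) + a n * φ (n + 1) + b n * φ n = lam1 * φ n) :
    (∀ (u : ℤ → ℝ) (n : ℤ), Dstarop a φ (Dop a φ u) n
        = (a (n - 1) * u (n - 1) + a n * u (n + 1) + b n * u n) - lam1 * u n)
    ∧ (∀ (u : ℤ → ℝ) (n : ℤ), Dop a φ (Dstarop a φ u) n
        = (a1seq a φ (n - 1) * u (n - 1) + a1seq a φ n * u (n + 1)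
            + b1seq a φ lam1 n * u n) - lam1 * u n)
    ∧ (¬ ∃ ψ : ℤ → ℝ, Memℓp ψ 2 ∧ ψ ≠ 0 ∧ ∀ n : ℤ, Dop a φ (Dstarop a φ ψ) n = 0)
    ∧ (∀ lam : ℝ, lam ∉ Set.Icc (-2 : ℝ) 2 →
        (IsJacobiEigenvalue (a1seq a φ) (b1seq a φ lam1) lam ↔
          (IsJacobiEigenvalue a b lam ∧ lam ≠ lam1))) := by
  obtain ⟨C, hα, hβ⟩ := exists_norm_commCoeff_le ha_neg hφ_pos hφ_eig
    (bddAbove_range_of_forall_lt_abs hb)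
  have hP1 := Dstarop_Dop_apply ha_neg hφ_pos hφ_eig
  have hP2 := Dop_Dstarop_apply ha_neg hφ_pos lam1
  have hker : ∀ ψ, Memℓp ψ 2 → Dop a φ (Dstarop a φ ψ) = 0 → ψ = 0 := fun ψ =>
    eq_zero_of_Dop_Dstarop_eq_zero ha_neg hφ_pos hφ_mem hα hβ
  refine ⟨hP1, hP2, fun ⟨ψ, hψ, hψ0, h⟩ => hψ0 (hker ψ hψ (funext h)), fun lam _ => ?_⟩
  rw [isJacobiEigenvalue_iff_isL2Eigenvalue, isJacobiEigenvalue_iff_isL2Eigenvalue]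
  rw [Dop_eq, Dstarop_eq] at hP1 hP2 hker
  exact isL2Eigenvalue_iff_of_factorization (W := jacobiOp a b)
    (W₁ := jacobiOp (a1seq a φ) (b1seq a φ lam1)) (fun _ => upperBidiag_memℓp hα hβ)
    (fun _ => lowerBidiag_memℓp hα hβ) hP1 hP2 hker
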